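/- The ℂ-subalgebra of ℂ[u,v,w] generated by u^5, v^5, w^5 and uvw is isomorphic as a ℂ-algebra to ℂ[x,y,z,t]/(xyz − t^5), the quotient of the polynomial ring in four variables by the principal ideal generated by xyz − t^5 (the isomorphism sending x ↦ u^5, y ↦ v^5, z ↦ w^5, t ↦ uvw). -/

import Mathlib

/-!
The map `x ↦ uⁿ, y ↦ vⁿ, z ↦ wⁿ, t ↦ uvw` kills `xyz - tⁿ` and its image is generated by the
four images. Modulo `xyz - tⁿ` every polynomial is congruent to one in which `t` only occurs with
exponent `< n`, and on such polynomials the map sends distinct monomials to distinct monomials: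
`x^a y^b z^c t^e ↦ u^(na+e) v^(nb+e) w^(nc+e)`, and `e` is recovered as `(na + e) mod n`.
Hence the kernel is `(xyz - tⁿ)`, and the first isomorphism theorem applies.
-/

open MvPolynomial

/-- The ideal `(xyz − t⁵)` of `ℂ[x,y,z,t]` (variables indexed by `Fin 4`). -/
noncomputable def toricIdeal : Ideal (MvPolynomial (Fin 4) ℂ) :=
  Ideal.span {(X 0 : MvPolynomial (Fin 4) ℂ) * X 1 * X 2 - X 3 ^ 5}

/-- The subalgebra `ℂ[u⁵, v⁵, w⁵, uvw]` of `ℂ[u,v,w]` (variables indexed by `Fin 3`). -/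
noncomputable def invariantAlgebra : Subalgebra ℂ (MvPolynomial (Fin 3) ℂ) :=
  Algebra.adjoin ℂ
    {(X 0 : MvPolynomial (Fin 3) ℂ) ^ 5, X 1 ^ 5, X 2 ^ 5, X 0 * X 1 * X 2}

namespace ToricInvariants

noncomputable def exponentMap (n : ℕ) (d : Fin 4 →₀ ℕ) : Fin 3 →₀ ℕ :=
  Finsupp.equivFunOnFinite.symm ![n * d 0 + d 3, n * d 1 + d 3, n * d 2 + d 3]

/-- Trades `t^(n * (e / n))` for `(xyz)^(e / n)`, where `e` is the exponent of `t`. -/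
noncomputable def reduceExponent (n : ℕ) (d : Fin 4 →₀ ℕ) : Fin 4 →₀ ℕ :=
  Finsupp.equivFunOnFinite.symm
    ![d 0 + d 3 / n, d 1 + d 3 / n, d 2 + d 3 / n, d 3 % n]

variable (R : Type*) [CommRing R] (n : ℕ)

noncomputable def generators : Fin 4 → MvPolynomial (Fin 3) R :=
  ![X 0 ^ n, X 1 ^ n, X 2 ^ n, X 0 * X 1 * X 2]

noncomputable def toricMap : MvPolynomial (Fin 4) R →ₐ[R] MvPolynomial (Fin 3) R :=
  aeval (generators R n)

noncomputable def relation : MvPolynomial (Fin 4) R :=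
  X 0 * X 1 * X 2 - X 3 ^ n

variable {R n}

lemma monomial_eq_fin_four (d : Fin 4 →₀ ℕ) (c : R) :
    monomial d c = C c * X 0 ^ d 0 * X 1 ^ d 1 * X 2 ^ d 2 * X 3 ^ d 3 := by
  rw [monomial_eq, Finsupp.prod_fintype _ _ fun _ => pow_zero _, Fin.prod_univ_four]
  ring

lemma toricMap_monomial (d : Fin 4 →₀ ℕ) (c : R) :
    toricMap R n (monomial d c) = monomial (exponentMap n d) c := by
  rw [monomial_eq_fin_four, monomial_eq, Finsupp.prod_fintype _ _ fun _ => pow_zero _,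
    Fin.prod_univ_three]
  simp only [toricMap, generators, exponentMap, map_mul, map_pow, aeval_C, aeval_X,
    algebraMap_eq, Matrix.cons_val, Finsupp.equivFunOnFinite_symm_apply_apply]
  ring

lemma exponentMap_injOn : Set.InjOn (exponentMap n) {d | d 3 < n} := by
  intro d (hd : d 3 < n) e (he : e 3 < n) h
  have hcoord (i : Fin 3) : exponentMap n d i = exponentMap n e i := by rw [h]
  simp only [exponentMap, Finsupp.equivFunOnFinite_symm_apply_apply] at hcoord
  have h0 : n * d 0 + d 3 = n * e 0 + e 3 := hcoord 0
  have h1 : n * d 1 + d 3 = n * e 1 + e 3 := hcoord 1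
  have h2 : n * d 2 + d 3 = n * e 2 + e 3 := hcoord 2
  have h3 : d 3 = e 3 := by
    simpa [Nat.mod_eq_of_lt hd, Nat.mod_eq_of_lt he] using congrArg (· % n) h0
  have hn : n ≠ 0 := by omega
  ext i
  fin_cases i
  · simpa [h3, hn] using h0
  · simpa [h3, hn] using h1
  · simpa [h3, hn] using h2
  · exact h3

lemma coeff_exponentMap_toricMap {q : MvPolynomial (Fin 4) R}
    (hq : ∀ d ∈ q.support, d 3 < n) {d : Fin 4 →₀ ℕ} (hd : d 3 < n) :
    coeff (exponentMap n d) (toricMap R n q) = coeff d q := by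
  conv_lhs => rw [q.as_sum, map_sum]
  simp only [toricMap_monomial, coeff_sum, coeff_monomial]
  rw [Finset.sum_eq_single d
    (fun e he hne => if_neg fun h => hne (exponentMap_injOn (hq e he) hd h))
    (fun hd' => by rw [if_pos rfl, notMem_support_iff.mp hd']), if_pos rfl]

lemma eq_zero_of_toricMap_eq_zero {q : MvPolynomial (Fin 4) R}
    (hq : ∀ d ∈ q.support, d 3 < n) (h : toricMap R n q = 0) : q = 0 := by
  ext d
  by_cases hd : d ∈ q.support
  · rw [← coeff_exponentMap_toricMap hq (hq d hd), h, coeff_zero, coeff_zero]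
  · rw [notMem_support_iff.mp hd, coeff_zero]

lemma mk_monomial_reduceExponent (d : Fin 4 →₀ ℕ) (c : R) :
    Ideal.Quotient.mk (Ideal.span {relation R n}) (monomial (reduceExponent n d) c) =
      Ideal.Quotient.mk (Ideal.span {relation R n}) (monomial d c) := by
  have hrel : Ideal.Quotient.mk (Ideal.span {relation R n}) (X 3 ^ n) =
      Ideal.Quotient.mk (Ideal.span {relation R n}) (X 0 * X 1 * X 2) := by
    rw [Ideal.Quotient.eq, ← neg_sub, relation, Ideal.neg_mem_iff]
    exact Ideal.mem_span_singleton_self _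
  rw [monomial_eq_fin_four, monomial_eq_fin_four, ← Nat.div_add_mod (d 3) n]
  simp only [reduceExponent, Finsupp.equivFunOnFinite_symm_apply_apply, Matrix.cons_val,
    map_mul, map_pow] at hrel ⊢
  rw [pow_add _ (n * _), pow_mul, hrel]
  ring

lemma exists_mk_eq_of_exponent_lt (hn : 0 < n) (p : MvPolynomial (Fin 4) R) :
    ∃ q : MvPolynomial (Fin 4) R, Ideal.Quotient.mk (Ideal.span {relation R n}) q =
      Ideal.Quotient.mk (Ideal.span {relation R n}) p ∧ ∀ d ∈ q.support, d 3 < n := by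
  classical
  refine ⟨∑ d ∈ p.support, monomial (reduceExponent n d) (coeff d p), ?_, fun d hd => ?_⟩
  · conv_rhs => rw [p.as_sum]
    simp only [map_sum, mk_monomial_reduceExponent]
  · obtain ⟨e, -, he⟩ := Finset.mem_biUnion.mp (support_sum hd)
    rw [Finset.mem_singleton.mp (support_monomial_subset he)]
    simpa [reduceExponent] using Nat.mod_lt _ hn

lemma span_relation_le_ker : Ideal.span {relation R n} ≤ RingHom.ker (toricMap R n) := by
  rw [Ideal.span_le, Set.singleton_subset_iff, SetLike.mem_coe, RingHom.mem_ker]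
  simp only [toricMap, relation, generators, map_sub, map_mul, map_pow, aeval_X,
    Matrix.cons_val]
  ring

theorem ker_toricMap (hn : 0 < n) :
    RingHom.ker (toricMap R n) = Ideal.span {relation R n} := by
  refine le_antisymm (fun p hp => ?_) span_relation_le_ker
  obtain ⟨q, hqp, hq⟩ := exists_mk_eq_of_exponent_lt hn p
  have hq0 : toricMap R n q = 0 := by
    have := span_relation_le_ker (Ideal.Quotient.eq.mp hqp)
    rwa [RingHom.mem_ker, map_sub, sub_eq_zero, hp] at this
  rw [← Ideal.Quotient.eq_zero_iff_mem, ← hqp, eq_zero_of_toricMap_eq_zero hq hq0, map_zero]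

theorem range_toricMap :
    (toricMap R n).range = Algebra.adjoin R {X 0 ^ n, X 1 ^ n, X 2 ^ n, X 0 * X 1 * X 2} := by
  rw [toricMap, aeval_range, generators]
  simp only [Matrix.range_cons, Matrix.range_empty, Set.union_empty, Set.singleton_union]

noncomputable def quotientEquivAdjoin (hn : 0 < n) :
    (MvPolynomial (Fin 4) R ⧸ Ideal.span {relation R n}) ≃ₐ[R]
      Algebra.adjoin R {(X 0 : MvPolynomial (Fin 3) R) ^ n, X 1 ^ n, X 2 ^ n, X 0 * X 1 * X 2} :=
  (Ideal.quotientEquivAlgOfEq R (ker_toricMap hn).symm).trans <|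
    (Ideal.quotientKerEquivRange _).trans (Subalgebra.equivOfEq _ _ range_toricMap)

lemma quotientEquivAdjoin_mk (hn : 0 < n) (p : MvPolynomial (Fin 4) R) :
    (quotientEquivAdjoin hn (Ideal.Quotient.mk _ p) : MvPolynomial (Fin 3) R) =
      toricMap R n p := by
  simp [quotientEquivAdjoin, Ideal.quotientKerEquivRange,
    Ideal.quotientKerAlgEquivOfSurjective_mk]

end ToricInvariants

/-- The `ℂ`-subalgebra `ℂ[u⁵, v⁵, w⁵, uvw] ⊆ ℂ[u,v,w]` is isomorphic as a
`ℂ`-algebra to `ℂ[x,y,z,t]/(xyz − t⁵)`, via an isomorphism sending `x ↦ u⁵`, `y ↦ v⁵`,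
`z ↦ w⁵`, `t ↦ uvw`. -/
theorem invariant_algebra_iso_toric_hypersurface :
    ∃ e : (MvPolynomial (Fin 4) ℂ ⧸ toricIdeal) ≃ₐ[ℂ] invariantAlgebra,
      ((e (Ideal.Quotient.mk toricIdeal (X 0)) : MvPolynomial (Fin 3) ℂ) = X 0 ^ 5) ∧
      ((e (Ideal.Quotient.mk toricIdeal (X 1)) : MvPolynomial (Fin 3) ℂ) = X 1 ^ 5) ∧
      ((e (Ideal.Quotient.mk toricIdeal (X 2)) : MvPolynomial (Fin 3) ℂ) = X 2 ^ 5) ∧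
      ((e (Ideal.Quotient.mk toricIdeal (X 3)) : MvPolynomial (Fin 3) ℂ) =
        X 0 * X 1 * X 2) := by
  refine ⟨ToricInvariants.quotientEquivAdjoin (R := ℂ) (n := 5) (by norm_num), ?_, ?_, ?_, ?_⟩ <;>
  · exact (ToricInvariants.quotientEquivAdjoin_mk _ _).trans (aeval_X _ _)
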